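/- Bounding λ away from zero along a constant-radius curve: assume (A)–(G), let ϱ ∈ (r₋,r₊) with Γ_ϱ ≠ ∅, and assume that for every ε > 0 there exist v₁ ≥ v₀ and c > 0 such that |Q(u_ϱ(v),v) − Q₊| + |ϖ(u_ϱ(v),v) − ϖ₊| < ε and 0 < c ≤ κ(u_ϱ(v),v) ≤ 1 for all v ≥ v₁. Then there exist constants C₁, C₂ > 0 such that −C₂ ≤ λ(u_ϱ(v),v) ≤ −C₁ < 0 for all v ≥ v₁. -/

import Mathlib

/-!
Common framework: the spherically symmetric Einstein–Maxwell–charged-Klein–Gordon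
first-order system, its characteristic initial value problem, and the
black-hole interior setting of the paper.
-/

noncomputable section

open Real Set Filter MeasureTheory Topology

/-- Partial derivative in the first (ingoing, `u`) variable. -/
def pdu (f : ℝ → ℝ → ℝ) (u v : ℝ) : ℝ := deriv (fun x => f x v) u

/-- Partial derivative in the second (outgoing, `v`) variable. -/
def pdv (f : ℝ → ℝ → ℝ) (u v : ℝ) : ℝ := deriv (fun y => f u y) v

/-- Partial `u`-derivative of a complex-valued function. -/
def pduC (f : ℝ → ℝ → ℂ) (u v : ℝ) : ℂ := deriv (fun x => f x v) u

/-- Partial `v`-derivative of a complex-valued function. -/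
def pdvC (f : ℝ → ℝ → ℂ) (u v : ℝ) : ℂ := deriv (fun y => f u y) v

/-- `(1−μ)(x, ϖp, Qp)` of the reference Reissner–Nordström–de Sitter solution. -/
def oneMinusMu (Λ ϖp Qp x : ℝ) : ℝ := 1 - 2 * ϖp / x + Qp ^ 2 / x ^ 2 - Λ / 3 * x ^ 2

/-- `(1/2)∂_r(1−μ)(x, ϖp, Qp)`, the surface-gravity function of the reference solution. -/
def Kofr (Λ ϖp Qp x : ℝ) : ℝ := ϖp / x ^ 2 - Qp ^ 2 / x ^ 3 - Λ / 3 * x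

/-- The unknowns of the first-order system. -/
structure FOVars where
  r : ℝ → ℝ → ℝ
  ν : ℝ → ℝ → ℝ
  lam : ℝ → ℝ → ℝ
  ϖ : ℝ → ℝ → ℝ
  κ : ℝ → ℝ → ℝ
  Q : ℝ → ℝ → ℝ
  A : ℝ → ℝ → ℝ
  φ : ℝ → ℝ → ℂ
  θ : ℝ → ℝ → ℂ
  ζ : ℝ → ℝ → ℂ

namespace FOVars

/-- `μ := 2ϖ/r − Q²/r² + (Λ/3) r²`. -/
def μ (S : FOVars) (Λ : ℝ) (u v : ℝ) : ℝ :=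
  2 * S.ϖ u v / S.r u v - (S.Q u v) ^ 2 / (S.r u v) ^ 2 + Λ / 3 * (S.r u v) ^ 2

/-- `Ω² := −4νκ`. -/
def Ω2 (S : FOVars) (u v : ℝ) : ℝ := -4 * S.ν u v * S.κ u v

/-- `log Ω²`. -/
def logΩ2 (S : FOVars) (u v : ℝ) : ℝ := Real.log (S.Ω2 u v)

/-- Gauge covariant derivative `D_u = ∂_u + i q A_u`. -/
def Du (S : FOVars) (q : ℝ) (f : ℝ → ℝ → ℂ) (u v : ℝ) : ℂ :=
  pduC f u v + Complex.I * (q : ℂ) * ((S.A u v : ℝ) : ℂ) * f u v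

/-- The dynamical surface gravity `K := ϖ/r² − Q²/r³ − (Λ/3) r`. -/
def Kfun (S : FOVars) (Λ : ℝ) (u v : ℝ) : ℝ :=
  S.ϖ u v / (S.r u v) ^ 2 - (S.Q u v) ^ 2 / (S.r u v) ^ 3 - Λ / 3 * S.r u v

/-- A solution of the first-order Einstein–Maxwell–charged-Klein–Gordon system on `D`:
all unknowns are continuous on `D`, all partial derivatives appearing in the system are
continuous on `D`, the functions `r`, `ν`, `κ` do not vanish, and all the equations
together with the algebraic constraint `λ = κ(1−μ)` hold on `D`. -/
structure IsSolOn (S : FOVars) (Λ q m : ℝ) (D : Set (ℝ × ℝ)) : Prop where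
  cont_r : ContinuousOn (fun p : ℝ × ℝ => S.r p.1 p.2) D
  cont_ν : ContinuousOn (fun p : ℝ × ℝ => S.ν p.1 p.2) D
  cont_lam : ContinuousOn (fun p : ℝ × ℝ => S.lam p.1 p.2) D
  cont_ϖ : ContinuousOn (fun p : ℝ × ℝ => S.ϖ p.1 p.2) D
  cont_κ : ContinuousOn (fun p : ℝ × ℝ => S.κ p.1 p.2) D
  cont_Q : ContinuousOn (fun p : ℝ × ℝ => S.Q p.1 p.2) D
  cont_A : ContinuousOn (fun p : ℝ × ℝ => S.A p.1 p.2) D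
  cont_φ : ContinuousOn (fun p : ℝ × ℝ => S.φ p.1 p.2) D
  cont_θ : ContinuousOn (fun p : ℝ × ℝ => S.θ p.1 p.2) D
  cont_ζ : ContinuousOn (fun p : ℝ × ℝ => S.ζ p.1 p.2) D
  cont_pdu_r : ContinuousOn (fun p : ℝ × ℝ => pdu S.r p.1 p.2) D
  cont_pdv_r : ContinuousOn (fun p : ℝ × ℝ => pdv S.r p.1 p.2) D
  cont_pdu_φ : ContinuousOn (fun p : ℝ × ℝ => pduC S.φ p.1 p.2) D
  cont_pdv_φ : ContinuousOn (fun p : ℝ × ℝ => pdvC S.φ p.1 p.2) D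
  cont_pdv_ν : ContinuousOn (fun p : ℝ × ℝ => pdv S.ν p.1 p.2) D
  cont_pdu_lam : ContinuousOn (fun p : ℝ × ℝ => pdu S.lam p.1 p.2) D
  cont_pdu_ϖ : ContinuousOn (fun p : ℝ × ℝ => pdu S.ϖ p.1 p.2) D
  cont_pdv_ϖ : ContinuousOn (fun p : ℝ × ℝ => pdv S.ϖ p.1 p.2) D
  cont_pdu_θ : ContinuousOn (fun p : ℝ × ℝ => pduC S.θ p.1 p.2) D
  cont_pdv_ζ : ContinuousOn (fun p : ℝ × ℝ => pdvC S.ζ p.1 p.2) D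
  cont_pdu_κ : ContinuousOn (fun p : ℝ × ℝ => pdu S.κ p.1 p.2) D
  cont_pdu_Q : ContinuousOn (fun p : ℝ × ℝ => pdu S.Q p.1 p.2) D
  cont_pdv_Q : ContinuousOn (fun p : ℝ × ℝ => pdv S.Q p.1 p.2) D
  cont_pdv_A : ContinuousOn (fun p : ℝ × ℝ => pdv S.A p.1 p.2) D
  r_ne : ∀ ⦃u v : ℝ⦄, (u, v) ∈ D → S.r u v ≠ 0
  ν_ne : ∀ ⦃u v : ℝ⦄, (u, v) ∈ D → S.ν u v ≠ 0
  κ_ne : ∀ ⦃u v : ℝ⦄, (u, v) ∈ D → S.κ u v ≠ 0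
  eq_r_u : ∀ ⦃u v : ℝ⦄, (u, v) ∈ D → pdu S.r u v = S.ν u v
  eq_r_v : ∀ ⦃u v : ℝ⦄, (u, v) ∈ D → pdv S.r u v = S.lam u v
  eq_φ_u : ∀ ⦃u v : ℝ⦄, (u, v) ∈ D →
    S.Du q S.φ u v = S.ζ u v / ((S.r u v : ℝ) : ℂ)
  eq_φ_v : ∀ ⦃u v : ℝ⦄, (u, v) ∈ D →
    pdvC S.φ u v = S.θ u v / ((S.r u v : ℝ) : ℂ)
  eq_ν_v : ∀ ⦃u v : ℝ⦄, (u, v) ∈ D →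
    pdv S.ν u v = -2 * S.ν u v * S.κ u v / (S.r u v) ^ 2 *
      ((S.Q u v) ^ 2 / S.r u v + m ^ 2 * (S.r u v) ^ 3 * ‖(S.φ u v)‖ ^ 2 / 2 +
        Λ / 3 * (S.r u v) ^ 3 - S.ϖ u v)
  eq_lam_u : ∀ ⦃u v : ℝ⦄, (u, v) ∈ D →
    pdu S.lam u v = -2 * S.ν u v * S.κ u v / (S.r u v) ^ 2 *
      ((S.Q u v) ^ 2 / S.r u v + m ^ 2 * (S.r u v) ^ 3 * ‖(S.φ u v)‖ ^ 2 / 2 +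
        Λ / 3 * (S.r u v) ^ 3 - S.ϖ u v)
  eq_ϖ_u : ∀ ⦃u v : ℝ⦄, (u, v) ∈ D →
    pdu S.ϖ u v = S.ν u v / 2 * m ^ 2 * (S.r u v) ^ 2 * ‖(S.φ u v)‖ ^ 2
      - S.Q u v * q * (S.φ u v * (starRingEnd ℂ) (S.ζ u v)).im
      + ‖(S.ζ u v)‖ ^ 2 / (2 * S.ν u v) *
        (1 - 2 * S.ϖ u v / S.r u v + (S.Q u v) ^ 2 / (S.r u v) ^ 2 - Λ / 3 * (S.r u v) ^ 2)
  eq_ϖ_v : ∀ ⦃u v : ℝ⦄, (u, v) ∈ D →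
    pdv S.ϖ u v = S.lam u v / 2 * m ^ 2 * (S.r u v) ^ 2 * ‖(S.φ u v)‖ ^ 2
      + S.Q u v * q * (S.φ u v * (starRingEnd ℂ) (S.θ u v)).im
      + ‖(S.θ u v)‖ ^ 2 / (2 * S.κ u v)
  eq_θ_u : ∀ ⦃u v : ℝ⦄, (u, v) ∈ D →
    S.Du q S.θ u v = -(S.ζ u v / ((S.r u v : ℝ) : ℂ)) * ((S.lam u v : ℝ) : ℂ)
      + ((S.ν u v * S.κ u v : ℝ) : ℂ) * S.φ u v / ((S.r u v : ℝ) : ℂ) *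
        (((m ^ 2 * (S.r u v) ^ 2 : ℝ) : ℂ) - Complex.I * (q : ℂ) * ((S.Q u v : ℝ) : ℂ))
  eq_ζ_v : ∀ ⦃u v : ℝ⦄, (u, v) ∈ D →
    pdvC S.ζ u v = -(S.θ u v / ((S.r u v : ℝ) : ℂ)) * ((S.ν u v : ℝ) : ℂ)
      + ((S.ν u v * S.κ u v : ℝ) : ℂ) * S.φ u v / ((S.r u v : ℝ) : ℂ) *
        (((m ^ 2 * (S.r u v) ^ 2 : ℝ) : ℂ) + Complex.I * (q : ℂ) * ((S.Q u v : ℝ) : ℂ))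
  eq_κ_u : ∀ ⦃u v : ℝ⦄, (u, v) ∈ D →
    pdu S.κ u v = S.κ u v / (S.r u v * S.ν u v) * ‖(S.ζ u v)‖ ^ 2
  eq_Q_u : ∀ ⦃u v : ℝ⦄, (u, v) ∈ D →
    pdu S.Q u v = -q * S.r u v * (S.φ u v * (starRingEnd ℂ) (S.ζ u v)).im
  eq_Q_v : ∀ ⦃u v : ℝ⦄, (u, v) ∈ D →
    pdv S.Q u v = q * S.r u v * (S.φ u v * (starRingEnd ℂ) (S.θ u v)).im
  eq_A_v : ∀ ⦃u v : ℝ⦄, (u, v) ∈ D →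
    pdv S.A u v = 2 * S.Q u v * S.ν u v * S.κ u v / (S.r u v) ^ 2
  constraint : ∀ ⦃u v : ℝ⦄, (u, v) ∈ D → S.lam u v = S.κ u v * (1 - S.μ Λ u v)

end FOVars

/-- Two tuples of unknowns agree on a set. -/
def AgreeOn (S S' : FOVars) (P : Set (ℝ × ℝ)) : Prop :=
  ∀ p ∈ P, S.r p.1 p.2 = S'.r p.1 p.2 ∧ S.ν p.1 p.2 = S'.ν p.1 p.2 ∧
    S.lam p.1 p.2 = S'.lam p.1 p.2 ∧ S.ϖ p.1 p.2 = S'.ϖ p.1 p.2 ∧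
    S.κ p.1 p.2 = S'.κ p.1 p.2 ∧ S.Q p.1 p.2 = S'.Q p.1 p.2 ∧
    S.A p.1 p.2 = S'.A p.1 p.2 ∧ S.φ p.1 p.2 = S'.φ p.1 p.2 ∧
    S.θ p.1 p.2 = S'.θ p.1 p.2 ∧ S.ζ p.1 p.2 = S'.ζ p.1 p.2

/-- `S` attains the prescribed characteristic initial data (with `v₀ = 0`),
ingoing data on `[0,a] × {0}` and outgoing data on `{0} × [0,b]`;
the gauge condition `ν₀ ≡ −1` is part of the data. -/
def MatchesData (S : FOVars) (a b : ℝ) (r₀ A₀ : ℝ → ℝ) (ζ₀ : ℝ → ℂ)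
    (lam₀ ϖ₀ κ₀ Q₀ : ℝ → ℝ) (θ₀ φ₀ : ℝ → ℂ) : Prop :=
  (∀ u ∈ Set.Icc (0:ℝ) a,
    S.r u 0 = r₀ u ∧ S.ζ u 0 = ζ₀ u ∧ S.A u 0 = A₀ u ∧ S.ν u 0 = -1) ∧
  (∀ v ∈ Set.Icc (0:ℝ) b,
    S.lam 0 v = lam₀ v ∧ S.ϖ 0 v = ϖ₀ v ∧ S.θ 0 v = θ₀ v ∧
    S.κ 0 v = κ₀ v ∧ S.φ 0 v = φ₀ v ∧ S.Q 0 v = Q₀ v)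

/-- A past set: together with any of its points it contains the
characteristic rectangle `[0,u] × [v₀,v]`. -/
def IsPastSet (v₀ : ℝ) (P : Set (ℝ × ℝ)) : Prop :=
  ∀ p ∈ P, Set.Icc (0:ℝ) p.1 ×ˢ Set.Icc v₀ p.2 ⊆ P

/-- `J⁻(T)`: union of the characteristic past rectangles of points of `T`. -/
def Jminus (v₀ : ℝ) (T : Set (ℝ × ℝ)) : Set (ℝ × ℝ) :=
  {p | ∃ p' ∈ T, 0 ≤ p.1 ∧ p.1 ≤ p'.1 ∧ v₀ ≤ p.2 ∧ p.2 ≤ p'.2}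

/-- `I⁻(T)`. -/
def Iminus (v₀ : ℝ) (T : Set (ℝ × ℝ)) : Set (ℝ × ℝ) :=
  {p | ∃ p' ∈ T, 0 ≤ p.1 ∧ p.1 < p'.1 ∧ v₀ ≤ p.2 ∧ p.2 < p'.2}

/-- `J⁺(T)` inside the maximal past set `P`. -/
def Jplus (P T : Set (ℝ × ℝ)) : Set (ℝ × ℝ) :=
  {p ∈ P | ∃ p' ∈ T, p'.1 ≤ p.1 ∧ p'.2 ≤ p.2}

/-- The characteristic initial value problem in the gauge of assumption (A),
under assumptions (A)–(D), together with its (unique) solution on the maximal past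
set `P ⊆ [0,U] × [v₀,∞)` containing the two initial hypersurfaces. -/
structure CharIVPBasic where
  S : FOVars
  Λ : ℝ
  q : ℝ
  m : ℝ
  U : ℝ
  v₀ : ℝ
  P : Set (ℝ × ℝ)
  hq : q ≠ 0
  hm : 0 ≤ m
  hU : 0 < U
  hv₀ : 0 ≤ v₀
  pastP : IsPastSet v₀ P
  initP : Set.Icc (0:ℝ) U ×ˢ {v₀} ∪ {(0:ℝ)} ×ˢ Set.Ici v₀ ⊆ P
  subP : P ⊆ Set.Icc (0:ℝ) U ×ˢ Set.Ici v₀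
  sol : S.IsSolOn Λ q m P
  maxP : ∀ (P' : Set (ℝ × ℝ)) (S' : FOVars), IsPastSet v₀ P' →
    P' ⊆ Set.Icc (0:ℝ) U ×ˢ Set.Ici v₀ → P ⊆ P' → S'.IsSolOn Λ q m P' →
    AgreeOn S S' P → P' ⊆ P
  -- (A)
  gaugeν : ∀ u ∈ Set.Icc (0:ℝ) U, S.ν u v₀ = -1
  gaugeκ : ∀ v ∈ Set.Ici v₀, S.κ 0 v = 1
  gaugeA : ∀ u ∈ Set.Icc (0:ℝ) U, S.A u v₀ = 0
  posr₀ : ∀ u ∈ Set.Icc (0:ℝ) U, 0 < S.r u v₀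
  posrEH : ∀ v ∈ Set.Ici v₀, 0 < S.r 0 v
  -- (B)
  reg_ν₀ : ContinuousOn (fun u => S.ν u v₀) (Set.Icc 0 U)
  reg_ζ₀ : ContinuousOn (fun u => S.ζ u v₀) (Set.Icc 0 U)
  reg_lam₀ : ContinuousOn (fun v => S.lam 0 v) (Set.Ici v₀)
  reg_θ₀ : ContinuousOn (fun v => S.θ 0 v) (Set.Ici v₀)
  reg_κ₀ : ContinuousOn (fun v => S.κ 0 v) (Set.Ici v₀)
  reg_r₀ : ContDiffOn ℝ 1 (fun u => S.r u v₀) (Set.Icc 0 U)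
  reg_A₀ : ContDiffOn ℝ 1 (fun u => S.A u v₀) (Set.Icc 0 U)
  reg_ϖ₀ : ContDiffOn ℝ 1 (fun v => S.ϖ 0 v) (Set.Ici v₀)
  reg_φ₀ : ContDiffOn ℝ 1 (fun v => S.φ 0 v) (Set.Ici v₀)
  reg_Q₀ : ContDiffOn ℝ 1 (fun v => S.Q 0 v) (Set.Ici v₀)
  -- (C)
  compat_r : ∀ u ∈ Set.Icc (0:ℝ) U, deriv (fun x => S.r x v₀) u = S.ν u v₀
  compat_φ : ∀ v ∈ Set.Ici v₀,
    deriv (fun y => S.φ 0 y) v = S.θ 0 v / ((S.r 0 v : ℝ) : ℂ)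
  compat_ϖ : ∀ v ∈ Set.Ici v₀, deriv (fun y => S.ϖ 0 y) v =
    S.lam 0 v / 2 * m ^ 2 * (S.r 0 v) ^ 2 * ‖(S.φ 0 v)‖ ^ 2
      + S.Q 0 v * q * (S.φ 0 v * (starRingEnd ℂ) (S.θ 0 v)).im
      + ‖(S.θ 0 v)‖ ^ 2 / (2 * S.κ 0 v)
  compat_Q : ∀ v ∈ Set.Ici v₀, deriv (fun y => S.Q 0 y) v =
    q * S.r 0 v * (S.φ 0 v * (starRingEnd ℂ) (S.θ 0 v)).im
  compat_lam : ∀ v ∈ Set.Ici v₀, S.lam 0 v =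
    S.κ 0 v * (1 - 2 * S.ϖ 0 v / S.r 0 v + (S.Q 0 v) ^ 2 / (S.r 0 v) ^ 2
      - Λ / 3 * (S.r 0 v) ^ 2)
  -- (D)
  negνEH : ∀ v ∈ Set.Ici v₀, S.ν 0 v < 0

/-- The black-hole setting: assumptions (A)–(G). -/
structure CharIVP extends CharIVPBasic where
  s : ℝ
  rm : ℝ
  rp : ℝ
  rC : ℝ
  ϖp : ℝ
  Qp : ℝ
  -- (E)
  hΛpos : 0 < Λ
  hs : 0 < s
  price : ∃ C > 0, ∀ v ∈ Set.Ici v₀,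
    ‖(S.φ 0 v)‖ + ‖(pdvC S.φ 0 v)‖ ≤ C * Real.exp (-s * v)
  -- (F): sub-extremal Reissner–Nordström–de Sitter reference solution
  hrm : 0 < rm
  hrmrp : rm < rp
  hrprC : rp < rC
  root_rm : oneMinusMu Λ ϖp Qp rm = 0
  root_rp : oneMinusMu Λ ϖp Qp rp = 0
  root_rC : oneMinusMu Λ ϖp Qp rC = 0
  hKp : 0 < Kofr Λ ϖp Qp rp
  hKm : Kofr Λ ϖp Qp rm ≠ 0
  lim_r : Filter.Tendsto (fun v => S.r 0 v) Filter.atTop (nhds rp)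
  lim_Q : Filter.Tendsto (fun v => S.Q 0 v) Filter.atTop (nhds Qp)
  lim_ϖ : Filter.Tendsto (fun v => S.ϖ 0 v) Filter.atTop (nhds ϖp)
  lim_K : Filter.Tendsto (fun v => S.Kfun Λ 0 v) Filter.atTop (nhds (Kofr Λ ϖp Qp rp))
  -- (G)
  lamEHpos : ∀ v ∈ Set.Ici v₀, 0 < S.lam 0 v

namespace CharIVP

/-- Surface gravity `K₊` of the event horizon of the reference solution. -/
def Kp (X : CharIVP) : ℝ := Kofr X.Λ X.ϖp X.Qp X.rp

/-- `K₋ := (1/2)|∂_r(1−μ)(r₋,ϖ₊,Q₊)|`. -/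
def Km (X : CharIVP) : ℝ := |Kofr X.Λ X.ϖp X.Qp X.rm|

/-- Level set `Γ_ϱ` of the area radius. -/
def Gam (X : CharIVP) (ϱ : ℝ) : Set (ℝ × ℝ) := {p ∈ X.P | X.S.r p.1 p.2 = ϱ}

/-- `c(s)`: `s` for `0 < s ≤ 2K₊ − η`, and `2K₊ − η` for `s ≥ 2K₊ − η`. -/
def csf (X : CharIVP) (η : ℝ) : ℝ := min X.s (2 * X.Kp - η)

/-- Dynamical surface gravity. -/
def KK (X : CharIVP) (u v : ℝ) : ℝ := X.S.Kfun X.Λ u v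

/-- The explicit constant `C_{K₋}` determined by `r₋, r₊, ϖ₊, Q₊, Λ`. -/
def CKminus (X : CharIVP) : ℝ :=
  4 * (4 * |X.ϖp| * (X.rp + X.rm) / X.rm ^ 4 +
    8 * X.Qp ^ 2 * (X.rp ^ 2 + X.rp * X.rm + X.rm ^ 2) / X.rm ^ 6 + |X.Λ| / 3)

/-- `c_μ^Y := |(1−μ)(Y,ϖ₊,Q₊)|`. -/
def cmuY (X : CharIVP) (Y : ℝ) : ℝ := |oneMinusMu X.Λ X.ϖp X.Qp Y|

end CharIVP

/-- The constants `η, δ, R, Δ, ε, Y, β, v₁` fixed as in the redshift, no-shift and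
early-blueshift propositions, together with the parametrisations `u_Y`, `v_Y` of the
spacelike curve `Γ_Y ∩ {v ≥ v₁}` and `u_γ` of the curve `γ`. -/
structure BlueshiftSetup (X : CharIVP) where
  η : ℝ
  δ : ℝ
  R : ℝ
  Δ : ℝ
  ε : ℝ
  Y : ℝ
  β : ℝ
  v₁ : ℝ
  hη0 : 0 < η
  hηK : η < X.Kp
  hδ0 : 0 < δ
  hδη : δ < η
  hR1 : 0 < X.rp - R
  hR2 : X.rp - R < δ
  hΔ0 : 0 < Δ
  hε0 : 0 < ε
  hΔε : Δ < ε
  hY1 : 0 < Y - X.rm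
  hY2 : Y - X.rm < Δ
  hβ0 : 0 < β
  hβ1 : β < X.csf η / (7 * X.Km)
  hv₁ : X.v₀ ≤ v₁
  uY : ℝ → ℝ
  vY : ℝ → ℝ
  uγ : ℝ → ℝ
  huY : ∀ v ∈ Set.Ici v₁, (uY v, v) ∈ X.P ∧ X.S.r (uY v) v = Y ∧ vY (uY v) = v
  hGamY : X.Gam Y ∩ {p : ℝ × ℝ | v₁ ≤ p.2} = (fun v => (uY v, v)) '' Set.Ici v₁
  hvY : ∀ u ∈ Set.Icc (0:ℝ) (uY v₁),
    X.S.r u (vY u) = Y ∧ v₁ ≤ vY u ∧ uY (vY u) = u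
  huγ : ∀ u ∈ Set.Icc (0:ℝ) (uY v₁), uγ ((1 + β) * vY u) = u
  huγ2 : ∀ v ∈ Set.Ici ((1 + β) * v₁),
    uγ v ∈ Set.Icc (0:ℝ) (uY v₁) ∧ (1 + β) * vY (uγ v) = v

namespace BlueshiftSetup

variable {X : CharIVP}

/-- `v_γ(u) := (1+β) v_Y(u)`. -/
def vγ (B : BlueshiftSetup X) (u : ℝ) : ℝ := (1 + B.β) * B.vY u

/-- The curve `γ`. -/
def gam (B : BlueshiftSetup X) : Set (ℝ × ℝ) :=
  (fun u => (u, B.vγ u)) '' Set.Icc (0:ℝ) (B.uY B.v₁)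

/-- `𝒞_s(u,v) := c(s)·v_Y(u) − 2(2K₋ + C̃ε)(v − v_Y(u))`. -/
def Cs (B : BlueshiftSetup X) (Ct u v : ℝ) : ℝ :=
  X.csf B.η * B.vY u - 2 * (2 * X.Km + Ct * B.ε) * (v - B.vY u)

end BlueshiftSetup

/-!
Multiplying by `r²`, `(1−μ)(r, ϖ₊, Q₊)` becomes the quartic `−(Λ/3)r⁴ + r² − 2ϖ₊r + Q₊²`, which has
no cubic term; its roots are therefore `r₋, r₊, r_C` and `−(r₋ + r₊ + r_C)`, so with `Λ > 0` it is
negative on `(r₋, r₊)`. Along `Γ_ϱ` the constraint gives `λ = κ · (1−μ)(ϱ, ϖ, Q)`, and once `ϖ, Q`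
are close enough to `ϖ₊, Q₊` the second factor stays within half of `(1−μ)(ϱ, ϖ₊, Q₊) < 0`.
-/

lemma quartic_eq_of_three_roots {a w Q e₁ e₂ e₃ : ℝ} (h₁₂ : e₁ ≠ e₂) (h₁₃ : e₁ ≠ e₃)
    (h₂₃ : e₂ ≠ e₃)
    (r₁ : e₁ ^ 2 - 2 * w * e₁ + Q ^ 2 - a * e₁ ^ 4 = 0)
    (r₂ : e₂ ^ 2 - 2 * w * e₂ + Q ^ 2 - a * e₂ ^ 4 = 0)
    (r₃ : e₃ ^ 2 - 2 * w * e₃ + Q ^ 2 - a * e₃ ^ 4 = 0) (x : ℝ) :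
    x ^ 2 - 2 * w * x + Q ^ 2 - a * x ^ 4 =
      -a * (x + e₁ + e₂ + e₃) * (x - e₁) * (x - e₂) * (x - e₃) := by
  have hV : (e₁ - e₂) * (e₁ - e₃) * (e₂ - e₃) ≠ 0 := by
    simp only [ne_eq, mul_eq_zero, sub_eq_zero, not_or]
    exact ⟨⟨h₁₂, h₁₃⟩, h₂₃⟩
  refine mul_right_cancel₀ hV ?_
  linear_combination ((x - e₂) * (x - e₃) * (e₂ - e₃)) * r₁
    - ((x - e₁) * (x - e₃) * (e₁ - e₃)) * r₂ + ((x - e₁) * (x - e₂) * (e₁ - e₂)) * r₃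

lemma oneMinusMu_mul_sq {x : ℝ} (hx : x ≠ 0) (Λ ϖp Qp : ℝ) :
    oneMinusMu Λ ϖp Qp x * x ^ 2 = x ^ 2 - 2 * ϖp * x + Qp ^ 2 - Λ / 3 * x ^ 4 := by
  unfold oneMinusMu
  field_simp

lemma oneMinusMu_neg_of_mem_Ioo {Λ ϖp Qp e₁ e₂ e₃ x : ℝ} (hΛ : 0 < Λ) (he₁ : 0 < e₁)
    (h₁₂ : e₁ < e₂) (h₂₃ : e₂ < e₃) (r₁ : oneMinusMu Λ ϖp Qp e₁ = 0)
    (r₂ : oneMinusMu Λ ϖp Qp e₂ = 0) (r₃ : oneMinusMu Λ ϖp Qp e₃ = 0)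
    (hx : x ∈ Ioo e₁ e₂) : oneMinusMu Λ ϖp Qp x < 0 := by
  obtain ⟨hx₁, hx₂⟩ := hx
  have hquartic (y : ℝ) (hy : 0 < y) (h : oneMinusMu Λ ϖp Qp y = 0) :
      y ^ 2 - 2 * ϖp * y + Qp ^ 2 - Λ / 3 * y ^ 4 = 0 := by
    rw [← oneMinusMu_mul_sq hy.ne', h, zero_mul]
  have hfactor := quartic_eq_of_three_roots h₁₂.ne (h₁₂.trans h₂₃).ne h₂₃.ne
    (hquartic e₁ he₁ r₁) (hquartic e₂ (by linarith) r₂) (hquartic e₃ (by linarith) r₃) x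
  have hneg : oneMinusMu Λ ϖp Qp x * x ^ 2 < 0 := by
    rw [oneMinusMu_mul_sq (by linarith), hfactor]
    have hpos : 0 < Λ / 3 * (x + e₁ + e₂ + e₃) * (x - e₁) * (e₂ - x) * (e₃ - x) := by
      have : 0 < x - e₁ := sub_pos.2 hx₁
      have : 0 < e₂ - x := sub_pos.2 hx₂
      have : 0 < e₃ - x := by linarith
      have : 0 < x + e₁ + e₂ + e₃ := by linarith
      positivity
    linarith
  exact neg_of_mul_neg_left hneg (sq_nonneg x)

lemma exists_abs_oneMinusMu_sub_lt (Λ ϖp Qp x : ℝ) {η : ℝ} (hη : 0 < η) :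
    ∃ δ > 0, ∀ ϖ Q : ℝ, |Q - Qp| + |ϖ - ϖp| < δ →
      |oneMinusMu Λ ϖ Q x - oneMinusMu Λ ϖp Qp x| < η := by
  have hcont : Continuous fun p : ℝ × ℝ => oneMinusMu Λ p.2 p.1 x := by
    unfold oneMinusMu; fun_prop
  obtain ⟨δ, hδ, hball⟩ := Metric.continuousAt_iff.1 (hcont.continuousAt (x := (Qp, ϖp))) η hη
  refine ⟨δ, hδ, fun ϖ Q hQϖ => ?_⟩
  have hdist : dist (Q, ϖ) (Qp, ϖp) < δ := by
    rw [Prod.dist_eq, Real.dist_eq, Real.dist_eq]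
    exact (max_le_add_of_nonneg (abs_nonneg _) (abs_nonneg _)).trans_lt hQϖ
  simpa only [Real.dist_eq] using hball hdist

namespace FOVars

lemma IsSolOn.lam_eq_κ_mul_oneMinusMu {S : FOVars} {Λ q m : ℝ} {D : Set (ℝ × ℝ)}
    (hS : S.IsSolOn Λ q m D) {u v : ℝ} (huv : (u, v) ∈ D) :
    S.lam u v = S.κ u v * oneMinusMu Λ (S.ϖ u v) (S.Q u v) (S.r u v) := by
  rw [hS.constraint huv, μ, oneMinusMu]
  ring

end FOVars

lemma mul_mem_Icc_of_mem_Icc {k L c A B : ℝ} (hc : 0 < c) (hA : 0 < A) (hk : k ∈ Icc c 1)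
    (hL : L ∈ Icc (-B) (-A)) : k * L ∈ Icc (-B) (-(c * A)) := by
  obtain ⟨hck, hk1⟩ := hk
  obtain ⟨hBL, hLA⟩ := hL
  constructor <;> nlinarith

theorem lambda_bounded_away_on_level_set_general (X : CharIVP) (ϱ : ℝ)
    (h1 : X.rm < ϱ) (h2 : ϱ < X.rp)
    (v₂ : ℝ) (uϱ : ℝ → ℝ)
    (hpar : ∀ v ∈ Set.Ici v₂, (uϱ v, v) ∈ X.P ∧ X.S.r (uϱ v) v = ϱ)
    (hyp : ∀ ε > 0, ∃ v₁, v₂ ≤ v₁ ∧ ∃ c > 0, ∀ v ∈ Set.Ici v₁,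
      |X.S.Q (uϱ v) v - X.Qp| + |X.S.ϖ (uϱ v) v - X.ϖp| < ε ∧
      c ≤ X.S.κ (uϱ v) v ∧ X.S.κ (uϱ v) v ≤ 1) :
    ∃ v₁, v₂ ≤ v₁ ∧ ∃ C₁ > 0, ∃ C₂ > 0, ∀ v ∈ Set.Ici v₁,
      -C₂ ≤ X.S.lam (uϱ v) v ∧ X.S.lam (uϱ v) v ≤ -C₁ := by
  set M := -oneMinusMu X.Λ X.ϖp X.Qp ϱ
  have hM : 0 < M := neg_pos.2 <| oneMinusMu_neg_of_mem_Ioo X.hΛpos X.hrm X.hrmrp X.hrprC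
    X.root_rm X.root_rp X.root_rC ⟨h1, h2⟩
  obtain ⟨δ, hδ, hclose⟩ := exists_abs_oneMinusMu_sub_lt X.Λ X.ϖp X.Qp ϱ (half_pos hM)
  obtain ⟨v₁, hv₂₁, c, hc, hall⟩ := hyp δ hδ
  refine ⟨v₁, hv₂₁, c * (M / 2), by positivity, 3 * M / 2, by positivity, fun v hv => ?_⟩
  obtain ⟨hP, hr⟩ := hpar v (hv₂₁.trans hv)
  obtain ⟨hQϖ, hκ⟩ := hall v hv
  have hL := abs_lt.1 (hclose _ _ hQϖ)
  rw [X.sol.lam_eq_κ_mul_oneMinusMu hP, hr]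
  exact mul_mem_Icc_of_mem_Icc hc (half_pos hM) hκ ⟨by linarith, by linarith⟩

/-- **Bounding `λ` away from zero along a constant-radius curve** (Lemma 5.3). -/
theorem lambda_bounded_away_on_level_set (X : CharIVP) (ϱ : ℝ)
    (h1 : X.rm < ϱ) (h2 : ϱ < X.rp) (hne : (X.Gam ϱ).Nonempty)
    (v₂ : ℝ) (hv₂ : X.v₀ ≤ v₂) (uϱ : ℝ → ℝ)
    (hpar : ∀ v ∈ Set.Ici v₂, (uϱ v, v) ∈ X.P ∧ X.S.r (uϱ v) v = ϱ)
    (hyp : ∀ ε > 0, ∃ v₁, v₂ ≤ v₁ ∧ ∃ c > 0, ∀ v ∈ Set.Ici v₁,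
      |X.S.Q (uϱ v) v - X.Qp| + |X.S.ϖ (uϱ v) v - X.ϖp| < ε ∧
      c ≤ X.S.κ (uϱ v) v ∧ X.S.κ (uϱ v) v ≤ 1) :
    ∃ v₁, v₂ ≤ v₁ ∧ ∃ C₁ > 0, ∃ C₂ > 0, ∀ v ∈ Set.Ici v₁,
      -C₂ ≤ X.S.lam (uϱ v) v ∧ X.S.lam (uϱ v) v ≤ -C₁ :=
  lambda_bounded_away_on_level_set_general X ϱ h1 h2 v₂ uϱ hpar hyp
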